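/- arXiv:2604.03536 — 3 statements merged into one kernel-verified Lean document; each statement's English description precedes it below -/
import Mathlib

section
/- Let {h_j}_{j=1}^p be functions ℝⁿ → ℝ, h(x) = max_j h_j(x), and let U be nonempty. Suppose α : ℝ → ℝ and ρ : ℝ → ℝ is positive definite, and suppose conjunctive compatibility holds at a point x with h(x) ≥ 0: there exists u ∈ U such that for all j with h_j(x) ≥ 0, a_j(x) + b_j(x)·u > -α(h_j(x)), where a_j + b_j·u encodes the Lie derivative of h_j. If moreover α is monotone increasing with α(0) = 0 (class-K), then there exist u ∈ U and ω ≥ 0 such that for ALL j ∈ {1,…,p}, a_j(x) + b_j(x)·u > -α(h_j(x)) - ω·ρ(h_j(x) - h(x)). -/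
open Matrix Finset

theorem conjunctive_compatibility_implies_gen_combo_cbf
    {n m p : ℕ} (hp : 0 < p) (U : Set (Fin m → ℝ)) (hU : U.Nonempty)
    (hs : Fin p → (Fin n → ℝ) → ℝ)
    (h : (Fin n → ℝ) → ℝ)
    (hdef : ∀ x, h x = (Finset.univ : Finset (Fin p)).sup'
      (Finset.univ_nonempty_iff.mpr (Fin.pos_iff_nonempty.mp hp)) (fun j => hs j x))
    (α ρ : ℝ → ℝ) (hα : Monotone α) (hα0 : α 0 = 0)
    (hρ0 : ρ 0 = 0) (hρpos : ∀ s : ℝ, s ≠ 0 → 0 < ρ s)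
    (a : Fin p → (Fin n → ℝ) → ℝ) (b : Fin p → (Fin n → ℝ) → (Fin m → ℝ))
    (x : Fin n → ℝ) (hx : 0 ≤ h x)
    (hcompat : ∃ u ∈ U, ∀ j : Fin p, 0 ≤ hs j x →
      a j x + b j x ⬝ᵥ u > -α (hs j x)) :
    ∃ u ∈ U, ∃ ω : ℝ, 0 ≤ ω ∧ ∀ j : Fin p,
      a j x + b j x ⬝ᵥ u > -α (hs j x) - ω * ρ (hs j x - h x) := by
  obtain ⟨u, hu, hcu⟩ := hcompat
  have hne : (Finset.univ : Finset (Fin p)).Nonempty :=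
    Finset.univ_nonempty_iff.mpr (Fin.pos_iff_nonempty.mp hp)
  -- ρ nonneg everywhere
  have hρnn : ∀ s : ℝ, 0 ≤ ρ s := by
    intro s
    by_cases hs0 : s = 0
    · simp [hs0, hρ0]
    · exact (hρpos s hs0).le
  set ω : ℝ := 1 + Finset.univ.sup' hne
    (fun j => max 0 ((-α (hs j x) - (a j x + b j x ⬝ᵥ u)) / ρ (hs j x - h x))) with hωdef
  have hωnn : 0 ≤ ω := by
    have : (0:ℝ) ≤ Finset.univ.sup' hne
        (fun j => max 0 ((-α (hs j x) - (a j x + b j x ⬝ᵥ u)) / ρ (hs j x - h x))) :=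
      le_trans (le_max_left _ _) (Finset.le_sup' (fun j => max 0 ((-α (hs j x) - (a j x + b j x ⬝ᵥ u)) / ρ (hs j x - h x))) (Finset.mem_univ hne.choose))
    rw [hωdef]; linarith
  refine ⟨u, hu, ω, hωnn, fun j => ?_⟩
  have hle : hs j x ≤ h x := by
    rw [hdef x]; exact Finset.le_sup' (fun j => hs j x) (Finset.mem_univ j)
  by_cases hj : 0 ≤ hs j x
  · have h1 := hcu j hj
    have h2 : 0 ≤ ω * ρ (hs j x - h x) := mul_nonneg hωnn (hρnn _)
    linarith
  · push_neg at hj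
    have hρj : 0 < ρ (hs j x - h x) := hρpos _ (by linarith)
    have hωge : (-α (hs j x) - (a j x + b j x ⬝ᵥ u)) / ρ (hs j x - h x) < ω := by
      have : (-α (hs j x) - (a j x + b j x ⬝ᵥ u)) / ρ (hs j x - h x) ≤
          Finset.univ.sup' hne
            (fun j => max 0 ((-α (hs j x) - (a j x + b j x ⬝ᵥ u)) / ρ (hs j x - h x))) :=
        le_trans (le_max_right _ _) (Finset.le_sup' (fun j => max 0 ((-α (hs j x) - (a j x + b j x ⬝ᵥ u)) / ρ (hs j x - h x))) (Finset.mem_univ j))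
      rw [hωdef]; linarith
    have := (div_lt_iff₀ hρj).mp hωge
    linarith
end

section
/- Let h : ℝ≥0 → ℝ be differentiable and α : ℝ → ℝ be locally Lipschitz, strictly increasing with α(0) = 0 (class-K extended). If h(0) ≥ 0 and h'(t) ≥ −α(h(t)) for all t ≥ 0, then h(t) ≥ 0 for all t ≥ 0. -/
theorem comparison_lemma_nonneg
    (h : ℝ → ℝ) (α : ℝ → ℝ)
    (hdiff : Differentiable ℝ h)
    (hαlip : LocallyLipschitz α) (hαmono : StrictMono α) (hα0 : α 0 = 0)
    (h0 : 0 ≤ h 0)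
    (hineq : ∀ t : ℝ, 0 ≤ t → deriv h t ≥ -α (h t)) :
    ∀ t : ℝ, 0 ≤ t → 0 ≤ h t := by
  intro t1 ht1
  by_contra hneg
  push_neg at hneg
  have hcont : Continuous h := hdiff.continuous
  set S : Set ℝ := {t | t ∈ Set.Icc 0 t1 ∧ 0 ≤ h t} with hS
  have hS0 : (0:ℝ) ∈ S := ⟨⟨le_refl 0, ht1⟩, h0⟩
  have hSne : S.Nonempty := ⟨0, hS0⟩
  have hSbdd : BddAbove S := ⟨t1, fun x hx => hx.1.2⟩
  have hSclosed : IsClosed S := by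
    have heq : S = Set.Icc 0 t1 ∩ h ⁻¹' Set.Ici 0 := by
      ext x; simp [hS, Set.mem_Icc, and_assoc]
    rw [heq]
    exact isClosed_Icc.inter (isClosed_Ici.preimage hcont)
  set s := sSup S with hs_def
  have hsS : s ∈ S := hSclosed.csSup_mem hSne hSbdd
  have hs0 : 0 ≤ s := hsS.1.1
  have hst1 : s ≤ t1 := hsS.1.2
  have hshs : 0 ≤ h s := hsS.2
  have hslt : s < t1 := lt_of_le_of_ne hst1 (fun heq => absurd hsS.2 (by
    rw [heq]; exact not_le.mpr hneg))
  have hlt : ∀ t ∈ Set.Ioc s t1, h t < 0 := by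
    intro t ht
    by_contra hge
    push_neg at hge
    have htS : t ∈ S := ⟨⟨hs0.trans ht.1.le, ht.2⟩, hge⟩
    exact absurd (le_csSup hSbdd htS) (not_le.mpr ht.1)
  have hs_eq : h s = 0 := by
    have hcl : s ∈ closure (Set.Ioc s t1) := by
      rw [closure_Ioc hslt.ne]; exact ⟨le_refl s, hslt.le⟩
    have hne : (nhdsWithin s (Set.Ioc s t1)).NeBot :=
      mem_closure_iff_nhdsWithin_neBot.mp hcl
    have htend : Filter.Tendsto h (nhdsWithin s (Set.Ioc s t1)) (nhds (h s)) :=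
      (hcont.continuousAt).continuousWithinAt
    have hle : h s ≤ 0 :=
      le_of_tendsto htend (eventually_nhdsWithin_of_forall fun x hx => (hlt x hx).le)
    linarith
  have hmono : MonotoneOn h (Set.Icc s t1) := by
    apply monotoneOn_of_deriv_nonneg (convex_Icc s t1) hcont.continuousOn
      (fun x _ => (hdiff x).differentiableWithinAt)
    intro x hx
    rw [interior_Icc] at hx
    have hx0 : 0 ≤ x := hs0.trans hx.1.le
    have h1 := hineq x hx0
    have h2 : α (h x) < 0 := by
      have := hαmono (hlt x ⟨hx.1, hx.2.le⟩)
      rwa [hα0] at this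
    linarith
  have : h s ≤ h t1 := hmono ⟨le_refl s, hslt.le⟩ ⟨hslt.le, le_refl t1⟩ hslt.le
  rw [hs_eq] at this
  linarith
end

section
/- Let φ : ℝ≥0 × ℝⁿ → ℝⁿ be a flow with the semigroup property, ψ : ℝⁿ → ℝ, h : ℝⁿ → ℝ, and T > 0. Define the implicit set C_I = {x : ψ(φ(τ,x)) ≥ 0 for all τ ∈ [0,T] and h(φ(T,x)) ≥ 0}. If the set C = {x : h(x) ≥ 0} is forward invariant under φ and C ⊆ {x : ψ(x) ≥ 0}, then C_I is forward invariant under φ. -/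
theorem implicit_safe_set_forwardInvariant {n : ℕ}
    (φ : ℝ → (Fin n → ℝ) → (Fin n → ℝ))
    (hzero : ∀ x, φ 0 x = x)
    (hsemi : ∀ s t : ℝ, 0 ≤ s → 0 ≤ t → ∀ x, φ s (φ t x) = φ (s + t) x)
    (ψ h : (Fin n → ℝ) → ℝ) (T : ℝ) (hT : 0 < T)
    (C : Set (Fin n → ℝ)) (hC : C = {x | 0 ≤ h x})
    (hCinv : ∀ x ∈ C, ∀ t : ℝ, 0 ≤ t → φ t x ∈ C)
    (hCS : C ⊆ {x | 0 ≤ ψ x})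
    (CI : Set (Fin n → ℝ))
    (hCI : CI = {x | (∀ τ ∈ Set.Icc (0:ℝ) T, 0 ≤ ψ (φ τ x)) ∧ 0 ≤ h (φ T x)}) :
    ∀ x ∈ CI, ∀ t : ℝ, 0 ≤ t → φ t x ∈ CI := by
  subst hCI hC
  intro x hx t ht
  obtain ⟨hψx, hhx⟩ := hx
  have hTC : φ T x ∈ {x | 0 ≤ h x} := hhx
  constructor
  · intro τ hτ
    obtain ⟨hτ0, hτT⟩ := hτ
    rw [hsemi τ t hτ0 ht]
    by_cases hcase : τ + t ≤ T
    · exact hψx (τ + t) ⟨by linarith, hcase⟩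
    · push_neg at hcase
      have h1 : (0:ℝ) ≤ τ + t - T := by linarith
      have h2 : φ (τ + t) x = φ (τ + t - T) (φ T x) := by
        rw [hsemi (τ + t - T) T h1 hT.le]
        ring_nf
      rw [h2]
      exact hCS (hCinv _ hTC _ h1)
  · show 0 ≤ h (φ T (φ t x))
    rw [hsemi T t hT.le ht]
    have : φ (T + t) x = φ t (φ T x) := by
      rw [hsemi t T ht hT.le]; ring_nf
    rw [this]
    exact hCinv _ hTC _ ht
end
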